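/- Let n ≥ 3, let f be a unit of ℤ[t^{±1}], and let ĥ : VT_n → GL_n(ℤ[t^{±1}]) be a group homomorphism such that ĥ(s_i) = R_i(f) for all 1 ≤ i ≤ n−1 and such that ĥ is 2-local, i.e. for each i, ĥ(ρ_i) agrees with the identity matrix except possibly in rows and columns i, i+1. Then there exists a unit g of ℤ[t^{±1}] such that for every 1 ≤ i ≤ n−1, ĥ(ρ_i) is the matrix agreeing with the identity except in rows and columns i, i+1, where it has the 2×2 block [[0, g],[g^{-1}, 0]]. -/

import Mathlib

noncomputable section
open Matrix

/-- The defining relations of the virtual twin group `VTₙ` on generators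
`s_0, …, s_{n-2}` (the `Sum.inl` generators, 0-indexed) and `ρ_0, …, ρ_{n-2}`
(the `Sum.inr` generators, 0-indexed). -/
def vtRels (n : ℕ) : Set (FreeGroup (Fin (n - 1) ⊕ Fin (n - 1))) :=
  {r | (∃ i : Fin (n - 1),
          r = FreeGroup.of (Sum.inl i) * FreeGroup.of (Sum.inl i)) ∨
       (∃ i j : Fin (n - 1), (i.val + 2 ≤ j.val ∨ j.val + 2 ≤ i.val) ∧
          r = FreeGroup.of (Sum.inl i) * FreeGroup.of (Sum.inl j) *
              (FreeGroup.of (Sum.inl i))⁻¹ * (FreeGroup.of (Sum.inl j))⁻¹) ∨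
       (∃ i j : Fin (n - 1), j.val = i.val + 1 ∧
          r = FreeGroup.of (Sum.inr i) * FreeGroup.of (Sum.inr j) * FreeGroup.of (Sum.inr i) *
              (FreeGroup.of (Sum.inr j) * FreeGroup.of (Sum.inr i) * FreeGroup.of (Sum.inr j))⁻¹) ∨
       (∃ i j : Fin (n - 1), (i.val + 2 ≤ j.val ∨ j.val + 2 ≤ i.val) ∧
          r = FreeGroup.of (Sum.inr i) * FreeGroup.of (Sum.inr j) *
              (FreeGroup.of (Sum.inr i))⁻¹ * (FreeGroup.of (Sum.inr j))⁻¹) ∨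
       (∃ i : Fin (n - 1),
          r = FreeGroup.of (Sum.inr i) * FreeGroup.of (Sum.inr i)) ∨
       (∃ i j : Fin (n - 1), (i.val + 2 ≤ j.val ∨ j.val + 2 ≤ i.val) ∧
          r = FreeGroup.of (Sum.inl i) * FreeGroup.of (Sum.inr j) *
              (FreeGroup.of (Sum.inl i))⁻¹ * (FreeGroup.of (Sum.inr j))⁻¹) ∨
       (∃ i j : Fin (n - 1), j.val = i.val + 1 ∧
          r = FreeGroup.of (Sum.inr i) * FreeGroup.of (Sum.inr j) * FreeGroup.of (Sum.inl i) *
              (FreeGroup.of (Sum.inl j) * FreeGroup.of (Sum.inr i) * FreeGroup.of (Sum.inr j))⁻¹)}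

/-- The `n × n` matrix over `ℤ[t^{±1}]` agreeing with the identity except in rows and
columns `i, i+1` (0-indexed), where it has the `2 × 2` block `[[0, u], [u⁻¹, 0]]`,
for a unit `u` of `ℤ[t^{±1}]`. -/
def Rmat (n i : ℕ) (u : (LaurentPolynomial ℤ)ˣ) : Matrix (Fin n) (Fin n) (LaurentPolynomial ℤ) :=
  Matrix.of fun j k =>
    if j.val = i ∧ k.val = i then 0
    else if j.val = i ∧ k.val = i + 1 then (u : LaurentPolynomial ℤ)
    else if j.val = i + 1 ∧ k.val = i then ((u⁻¹ : (LaurentPolynomial ℤ)ˣ) : LaurentPolynomial ℤ)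
    else if j.val = i + 1 ∧ k.val = i + 1 then 0
    else if j = k then 1 else 0

/-!
On the rows and columns `i, i+1, i+2`, the images `M` of `ρᵢ` and `N` of `ρᵢ₊₁` are `3 × 3`
matrices with a single free `2 × 2` block each, `[[a, b], [c, d]]` in the top left and
`[[p, q], [r, s]]` in the bottom right. A handful of entries of `M² = 1`, `N² = 1` and
`ρᵢ ρᵢ₊₁ sᵢ = sᵢ₊₁ ρᵢ ρᵢ₊₁` force `a = d = p = s = 0`, `bc = 1`, `q = b` and `r = c`, that is
`M = Rᵢ(b)` and `N = Rᵢ₊₁(b)`. Since `Rᵢ(g)` determines `g`, the units obtained from consecutive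
pairs agree, and one `g` serves every `i`.
-/

namespace Matrix

variable {ι κ R : Type*} [DecidableEq ι]

def IsLocalOn [Zero R] [One R] (s : Set ι) (A : Matrix ι ι R) : Prop :=
  ∀ j k, (j ∉ s ∨ k ∉ s) → A j k = (1 : Matrix ι ι R) j k

namespace IsLocalOn

variable {s t : Set ι} {A B : Matrix ι ι R}

section
variable [Zero R] [One R]

theorem mono (hA : IsLocalOn s A) (hst : s ⊆ t) : IsLocalOn t A :=
  fun j k hjk => hA j k (hjk.imp (mt (@hst j)) (mt (@hst k)))

theorem ext_of_submatrix_eq {e : κ → ι} (hA : IsLocalOn (Set.range e) A)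
    (hB : IsLocalOn (Set.range e) B) (h : A.submatrix e e = B.submatrix e e) : A = B := by
  ext j k
  by_cases hj : j ∈ Set.range e
  · by_cases hk : k ∈ Set.range e
    · obtain ⟨j, rfl⟩ := hj
      obtain ⟨k, rfl⟩ := hk
      exact congrFun₂ h j k
    · rw [hA j k (Or.inr hk), hB j k (Or.inr hk)]
  · rw [hA j k (Or.inl hj), hB j k (Or.inl hj)]

end

theorem submatrix_mul [Fintype ι] [Fintype κ] [NonAssocSemiring R] {e : κ → ι}
    (hA : IsLocalOn (Set.range e) A) (he : Function.Injective e) (B : Matrix ι ι R) :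
    (A * B).submatrix e e = A.submatrix e e * B.submatrix e e := by
  ext j k
  refine (Fintype.sum_of_injective e he _ _ (fun l hl => ?_) fun _ => rfl).symm
  simp only [hA _ l (Or.inr hl), one_apply_ne (show e j ≠ l by rintro rfl; exact hl ⟨j, rfl⟩),
    zero_mul]

end IsLocalOn

end Matrix

def twoBlock (n i : ℕ) : Set (Fin n) := {j | (j : ℕ) = i ∨ (j : ℕ) = i + 1}

def tripleAt {n i : ℕ} (hi : i + 2 < n) (k : Fin 3) : Fin n := ⟨i + k, by omega⟩

def topLeftBlock {R : Type*} [Zero R] [One R] (a b c d : R) : Matrix (Fin 3) (Fin 3) R :=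
  !![a, b, 0; c, d, 0; 0, 0, 1]

def bottomRightBlock {R : Type*} [Zero R] [One R] (a b c d : R) : Matrix (Fin 3) (Fin 3) R :=
  !![1, 0, 0; 0, a, b; 0, c, d]

section
variable {R : Type*} [Zero R] [One R] {n i : ℕ} (hi : i + 2 < n) {M : Matrix (Fin n) (Fin n) R}

theorem tripleAt_injective : Function.Injective (tripleAt hi) := fun j k h => by
  simpa [tripleAt, Fin.ext_iff] using h

theorem twoBlock_subset_range_tripleAt : twoBlock n i ⊆ Set.range (tripleAt hi) := by
  rintro j (hj | hj)
  · exact ⟨0, Fin.ext (by simp [tripleAt, hj])⟩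
  · exact ⟨1, Fin.ext (by simp [tripleAt, hj])⟩

theorem twoBlock_succ_subset_range_tripleAt : twoBlock n (i + 1) ⊆ Set.range (tripleAt hi) := by
  rintro j (hj | hj)
  · exact ⟨1, Fin.ext (by simp [tripleAt, hj])⟩
  · exact ⟨2, Fin.ext (by simp [tripleAt, hj])⟩

theorem submatrix_tripleAt_of_isLocalOn (hM : IsLocalOn (twoBlock n i) M) :
    M.submatrix (tripleAt hi) (tripleAt hi) =
      topLeftBlock (M (tripleAt hi 0) (tripleAt hi 0)) (M (tripleAt hi 0) (tripleAt hi 1))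
        (M (tripleAt hi 1) (tripleAt hi 0)) (M (tripleAt hi 1) (tripleAt hi 1)) := by
  ext j k : 1
  fin_cases j <;> fin_cases k <;> simp [topLeftBlock]
  all_goals rw [hM _ _ (by simp [twoBlock, tripleAt]), one_apply]; simp [tripleAt]

theorem submatrix_tripleAt_of_isLocalOn_succ (hM : IsLocalOn (twoBlock n (i + 1)) M) :
    M.submatrix (tripleAt hi) (tripleAt hi) =
      bottomRightBlock (M (tripleAt hi 1) (tripleAt hi 1)) (M (tripleAt hi 1) (tripleAt hi 2))
        (M (tripleAt hi 2) (tripleAt hi 1)) (M (tripleAt hi 2) (tripleAt hi 2)) := by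
  ext j k : 1
  fin_cases j <;> fin_cases k <;> simp [bottomRightBlock]
  all_goals
    rw [hM _ _ (by simp [twoBlock, tripleAt, show i ≠ i + 1 + 1 by omega]), one_apply]
    simp [tripleAt]

end

section
variable {R : Type*} [CommRing R] [IsDomain R]

theorem twin_relation_scalars (f : Rˣ) {a b c d p q r s : R}
    (hM₀ : a * a + b * c = 1) (hM₁ : c * b + d * d = 1) (hN : p * p + q * r = 1)
    (h₁ : d = 0 ∨ p = 0) (h₂ : a * f = b * p) (h₃ : c * f = f * r) (h₄ : d * q = f * s) :
    a = 0 ∧ d = 0 ∧ b * c = 1 ∧ p = 0 ∧ s = 0 ∧ q = b ∧ r = c := by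
  have hrc : r = c := mul_left_cancel₀ f.ne_zero (by rw [← h₃, mul_comm])
  obtain ⟨ha, hd, hbc⟩ : a = 0 ∧ d = 0 ∧ b * c = 1 := by
    rcases h₁ with hd | hp
    · have ha : a * a = 0 := by linear_combination hM₀ - hM₁ + d * hd
      exact ⟨mul_self_eq_zero.mp ha, hd, by linear_combination hM₁ - d * hd⟩
    · have ha : a = 0 := by simpa [hp, f.ne_zero] using h₂
      have hd : d * d = 0 := by linear_combination hM₁ - hM₀ + a * ha
      exact ⟨ha, mul_self_eq_zero.mp hd, by linear_combination hM₀ - a * ha⟩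
  have hs : s = 0 := by simpa [hd, f.ne_zero] using h₄
  have hp : p = 0 := by linear_combination -p * hbc - c * h₂ + c * f * ha
  refine ⟨ha, hd, hbc, hp, hs, ?_, hrc⟩
  linear_combination -q * hbc + b * hN - b * p * hp - b * q * hrc

theorem exists_unit_of_twin_relation (f : Rˣ) {a b c d p q r s : R}
    (hM : topLeftBlock a b c d * topLeftBlock a b c d = 1)
    (hN : bottomRightBlock p q r s * bottomRightBlock p q r s = 1)
    (hrel : topLeftBlock a b c d * (bottomRightBlock p q r s * topLeftBlock 0 (f : R) ↑f⁻¹ 0) =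
      bottomRightBlock 0 (f : R) ↑f⁻¹ 0 * (topLeftBlock a b c d * bottomRightBlock p q r s)) :
    ∃ g : Rˣ, topLeftBlock a b c d = topLeftBlock 0 (g : R) ↑g⁻¹ 0 ∧
      bottomRightBlock p q r s = bottomRightBlock 0 (g : R) ↑g⁻¹ 0 := by
  simp only [topLeftBlock, bottomRightBlock, mul_fin_three, one_fin_three] at hM hN hrel
  obtain ⟨rfl, rfl, hbc, rfl, rfl, rfl, rfl⟩ := twin_relation_scalars f
    (by simpa using congrFun₂ hM 0 0) (by simpa using congrFun₂ hM 1 1)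
    (by simpa using congrFun₂ hN 1 1) (by simpa using congrFun₂ hrel 2 1)
    (by simpa using congrFun₂ hrel 0 1) (by simpa using congrFun₂ hrel 1 1)
    (by simpa using congrFun₂ hrel 1 2)
  exact ⟨Units.mkOfMulEqOne _ _ hbc, rfl, rfl⟩
end

section
open LaurentPolynomial

theorem isLocalOn_Rmat (n i : ℕ) (u : ℤ[T;T⁻¹]ˣ) : IsLocalOn (twoBlock n i) (Rmat n i u) := by
  intro j k hjk
  simp only [twoBlock, Set.mem_ofPred_eq] at hjk
  rw [one_apply, Rmat, of_apply]
  split_ifs <;> first | rfl | omega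

theorem Rmat_injective {n i : ℕ} (hi : i + 1 < n) : Function.Injective (Rmat n i) := by
  intro u v h
  have := congrFun₂ h ⟨i, by omega⟩ ⟨i + 1, hi⟩
  exact Units.ext (by simpa [Rmat] using this)

section
variable {n i : ℕ} (hi : i + 2 < n)

theorem submatrix_tripleAt_Rmat (u : ℤ[T;T⁻¹]ˣ) :
    (Rmat n i u).submatrix (tripleAt hi) (tripleAt hi) =
      topLeftBlock 0 (u : ℤ[T;T⁻¹]) ↑u⁻¹ 0 := by
  ext j k : 1
  fin_cases j <;> fin_cases k <;> simp [Rmat, tripleAt, topLeftBlock]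

theorem submatrix_tripleAt_Rmat_succ (u : ℤ[T;T⁻¹]ˣ) :
    (Rmat n (i + 1) u).submatrix (tripleAt hi) (tripleAt hi) =
      bottomRightBlock 0 (u : ℤ[T;T⁻¹]) ↑u⁻¹ 0 := by
  ext j k : 1
  fin_cases j <;> fin_cases k <;>
    simp [Rmat, tripleAt, bottomRightBlock, show i ≠ i + 1 + 1 by omega]
end

theorem exists_eq_Rmat_of_twin_relation {n i : ℕ} (hi : i + 2 < n) (f : ℤ[T;T⁻¹]ˣ)
    {M N : Matrix (Fin n) (Fin n) ℤ[T;T⁻¹]} (hM : IsLocalOn (twoBlock n i) M)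
    (hN : IsLocalOn (twoBlock n (i + 1)) N) (hM2 : M * M = 1) (hN2 : N * N = 1)
    (hrel : M * N * Rmat n i f = Rmat n (i + 1) f * (M * N)) :
    ∃ g, M = Rmat n i g ∧ N = Rmat n (i + 1) g := by
  have he := tripleAt_injective hi
  have hM' := hM.mono (twoBlock_subset_range_tripleAt hi)
  have hN' := hN.mono (twoBlock_succ_subset_range_tripleAt hi)
  have hT' := (isLocalOn_Rmat n (i + 1) f).mono (twoBlock_succ_subset_range_tripleAt hi)
  obtain ⟨g, hMg, hNg⟩ := exists_unit_of_twin_relation f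
    (by rw [← submatrix_tripleAt_of_isLocalOn hi hM, ← hM'.submatrix_mul he, hM2,
      submatrix_one _ he])
    (by rw [← submatrix_tripleAt_of_isLocalOn_succ hi hN, ← hN'.submatrix_mul he, hN2,
      submatrix_one _ he])
    (by rw [← submatrix_tripleAt_of_isLocalOn hi hM, ← submatrix_tripleAt_of_isLocalOn_succ hi hN,
      ← submatrix_tripleAt_Rmat hi, ← submatrix_tripleAt_Rmat_succ hi, ← hN'.submatrix_mul he,
      ← hM'.submatrix_mul he, ← hM'.submatrix_mul he, ← hT'.submatrix_mul he, ← mul_assoc, hrel])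
  refine ⟨g,
    hM'.ext_of_submatrix_eq ((isLocalOn_Rmat n i g).mono (twoBlock_subset_range_tripleAt hi)) ?_,
    hN'.ext_of_submatrix_eq
      ((isLocalOn_Rmat n (i + 1) g).mono (twoBlock_succ_subset_range_tripleAt hi)) ?_⟩
  · rw [submatrix_tripleAt_of_isLocalOn hi hM, hMg, submatrix_tripleAt_Rmat]
  · rw [submatrix_tripleAt_of_isLocalOn_succ hi hN, hNg, submatrix_tripleAt_Rmat_succ]

end

theorem Fin.exists_forall_of_adjacent {k : ℕ} {α : Type*} {P : Fin k → α → Prop} (hk : 1 < k)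
    (huniq : ∀ i g g', P i g → P i g' → g = g')
    (hadj : ∀ i j : Fin k, (j : ℕ) = i + 1 → ∃ g, P i g ∧ P j g) : ∃ g, ∀ i, P i g := by
  obtain ⟨g, hg₀, -⟩ := hadj ⟨0, by omega⟩ ⟨1, hk⟩ rfl
  suffices ∀ m (hm : m < k), P ⟨m, hm⟩ g from ⟨g, fun i => this i i.isLt⟩
  intro m
  induction m with
  | zero => exact fun _ => hg₀
  | succ m ih =>
    intro hm
    obtain ⟨g', hg'm, hg'succ⟩ := hadj ⟨m, by omega⟩ ⟨m + 1, hm⟩ rfl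
    rwa [huniq _ _ _ (ih (by omega)) hg'm]

namespace VirtualTwin

variable {n : ℕ}

theorem rho_mul_self (i : Fin (n - 1)) :
    (PresentedGroup.of (Sum.inr i) : PresentedGroup (vtRels n)) * PresentedGroup.of (Sum.inr i)
      = 1 :=
  PresentedGroup.one_of_mem (Or.inr <| Or.inr <| Or.inr <| Or.inr <| Or.inl ⟨i, rfl⟩)

theorem rho_mul_rho_mul_s {i j : Fin (n - 1)} (hij : (j : ℕ) = i + 1) :
    (PresentedGroup.of (Sum.inr i) * PresentedGroup.of (Sum.inr j) * PresentedGroup.of (Sum.inl i)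
      : PresentedGroup (vtRels n)) =
      PresentedGroup.of (Sum.inl j) * PresentedGroup.of (Sum.inr i) *
        PresentedGroup.of (Sum.inr j) := by
  have := PresentedGroup.mk_eq_mk_of_mul_inv_mem (rels := vtRels n)
    (Or.inr <| Or.inr <| Or.inr <| Or.inr <| Or.inr <| Or.inr ⟨i, j, hij, rfl⟩)
  simp only [map_mul] at this
  exact this

end VirtualTwin

/-- Let `n ≥ 3`, let `f` be a unit of `ℤ[t^{±1}]`, and let
`ĥ : VTₙ → GLₙ(ℤ[t^{±1}])` be a group homomorphism with `ĥ(sᵢ) = Rᵢ(f)` for all `i`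
which is 2-local, i.e. each `ĥ(ρᵢ)` agrees with the identity matrix except possibly in
rows and columns `i, i+1`. Then there is a unit `g` of `ℤ[t^{±1}]` such that
`ĥ(ρᵢ) = Rᵢ(g)` for every `i`. -/
theorem statement14 (n : ℕ) (hn : 3 ≤ n) (f : (LaurentPolynomial ℤ)ˣ)
    (h : PresentedGroup (vtRels n) →*
      Matrix.GeneralLinearGroup (Fin n) (LaurentPolynomial ℤ))
    (hs : ∀ i : Fin (n - 1),
      (h (PresentedGroup.of (Sum.inl i)) :
        Matrix (Fin n) (Fin n) (LaurentPolynomial ℤ)) = Rmat n i.val f)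
    (hloc : ∀ i : Fin (n - 1), ∀ j k : Fin n,
      ((j.val ≠ i.val ∧ j.val ≠ i.val + 1) ∨ (k.val ≠ i.val ∧ k.val ≠ i.val + 1)) →
      (h (PresentedGroup.of (Sum.inr i)) :
          Matrix (Fin n) (Fin n) (LaurentPolynomial ℤ)) j k =
        (1 : Matrix (Fin n) (Fin n) (LaurentPolynomial ℤ)) j k) :
    ∃ g : (LaurentPolynomial ℤ)ˣ, ∀ i : Fin (n - 1),
      (h (PresentedGroup.of (Sum.inr i)) :
        Matrix (Fin n) (Fin n) (LaurentPolynomial ℤ)) = Rmat n i.val g := by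
  let ρ (i : Fin (n - 1)) : Matrix (Fin n) (Fin n) (LaurentPolynomial ℤ) :=
    h (PresentedGroup.of (Sum.inr i))
  have hρ_local (i : Fin (n - 1)) : IsLocalOn (twoBlock n i) (ρ i) :=
    fun j k hjk => hloc i j k (by simpa [twoBlock, not_or] using hjk)
  have hρ_sq (i : Fin (n - 1)) : ρ i * ρ i = 1 := by
    simpa using congrArg (fun x => (h x).val) (VirtualTwin.rho_mul_self i)
  refine Fin.exists_forall_of_adjacent (by omega)
    (fun i g g' hg hg' => Rmat_injective (by omega) (hg.symm.trans hg')) fun i j hij => ?_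
  rw [hij]
  refine exists_eq_Rmat_of_twin_relation (by omega) f (hρ_local i) (hij ▸ hρ_local j) (hρ_sq i)
    (hρ_sq j) ?_
  simpa [ρ, hs, hij, mul_assoc] using
    congrArg (fun x => (h x).val) (VirtualTwin.rho_mul_rho_mul_s hij)
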